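/- arXiv:1609.04897 — 10 statements merged into one kernel-verified Lean document; each statement's English description precedes it below -/
import Mathlib

section
/- For every r > 1, the constant A_r = 4^{-1/(r-1)} (r+1)^{(r+1)/(r-1)} r^{-r/(r-1)} satisfies 1 < A_r < 2, and moreover (log 2)/(log A_r) ≤ (r+1)/2. -/
/-!
With `φ x = (x + 1) log (x + 1) - x log x` one has `φ 1 = 2 log 2` and
`log A_r = (φ r - φ 1) / (r - 1)`. Since `φ' x = log (x + 1) - log x` lies in `(0, log 2)` for
`x > 1`, the mean value theorem gives `0 < log A_r < log 2`. The last bound amounts to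
`4 r log 2 ≤ (r + 1) φ r`: both sides agree at `r = 1`, and so do their derivatives, while the
second derivative of the difference is `2 (log (r + 1) - log r) - 1 / r ≥ 0`.
-/

open Real Set

noncomputable def phi (x : ℝ) : ℝ := negMulLog x - negMulLog (x + 1)

lemma phi_one : phi 1 = 2 * log 2 := by
  norm_num [phi, negMulLog]

lemma hasDerivAt_phi {x : ℝ} (hx : 0 < x) : HasDerivAt phi (log (x + 1) - log x) x := by
  have h := (hasDerivAt_negMulLog hx.ne').sub
    ((hasDerivAt_negMulLog (by linarith : x + 1 ≠ 0)).comp_add_const x 1)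
  exact h.congr_deriv (by ring)

lemma continuous_phi : Continuous phi := by
  unfold phi; fun_prop

lemma monotoneOn_Ici_of_hasDerivAt_of_nonneg {f f' : ℝ → ℝ} {a : ℝ}
    (hf : ∀ x, a ≤ x → HasDerivAt f (f' x) x) (hf' : ∀ x, a < x → 0 ≤ f' x) :
    MonotoneOn f (Ici a) := by
  refine monotoneOn_of_hasDerivWithinAt_nonneg (convex_Ici a) (f' := f')
    (fun x hx => (hf x hx).continuousAt.continuousWithinAt) (fun x hx => ?_) (fun x hx => ?_) <;>
    rw [interior_Ici] at hx
  · exact (hf x hx.le).hasDerivWithinAt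
  · exact hf' x hx

lemma log_add_one_sub_log_pos {x : ℝ} (hx : 0 < x) : 0 < log (x + 1) - log x := by
  linarith [log_lt_log hx (lt_add_one x)]

lemma log_add_one_sub_log_lt_log_two {x : ℝ} (hx : 1 < x) : log (x + 1) - log x < log 2 := by
  have h := log_lt_log (by linarith) (by linarith : x + 1 < 2 * x)
  rw [log_mul two_ne_zero (by linarith)] at h
  linarith

lemma inv_le_two_mul_log_add_one_sub_log {x : ℝ} (hx : 1 ≤ x) :
    x⁻¹ ≤ 2 * (log (x + 1) - log x) := by
  have hx0 : 0 < x := by linarith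
  -- `log (1 + 1 / x) ≥ 1 / (x + 1) ≥ 1 / (2 x)`
  have h := one_sub_inv_le_log_of_pos (by positivity : 0 < (x + 1) / x)
  rw [log_div (by linarith) hx0.ne', inv_div] at h
  have : x⁻¹ ≤ 2 * (1 - x / (x + 1)) := by
    rw [inv_le_iff_one_le_mul₀ hx0]
    field_simp
    linarith
  linarith

lemma slope_phi_mem_Ioo {r : ℝ} (hr : 1 < r) : (phi r - phi 1) / (r - 1) ∈ Ioo 0 (log 2) := by
  obtain ⟨c, ⟨hc1, -⟩, hc⟩ := exists_hasDerivAt_eq_slope phi (fun x => log (x + 1) - log x) hr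
    continuous_phi.continuousOn (fun x hx => hasDerivAt_phi (by linarith [hx.1]))
  rw [← hc]
  exact ⟨log_add_one_sub_log_pos (by linarith), log_add_one_sub_log_lt_log_two hc1⟩

lemma four_mul_log_two_le_phi_add {x : ℝ} (hx : 1 ≤ x) :
    4 * log 2 ≤ phi x + (x + 1) * (log (x + 1) - log x) := by
  have hmono : MonotoneOn (fun y => phi y + (y + 1) * (log (y + 1) - log y)) (Ici 1) := by
    refine monotoneOn_Ici_of_hasDerivAt_of_nonneg
      (f' := fun y => 2 * (log (y + 1) - log y) - y⁻¹) (fun y hy => ?_)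
      (fun y hy => by linarith [inv_le_two_mul_log_add_one_sub_log hy.le])
    have hy0 : 0 < y := by linarith
    have h := (hasDerivAt_phi hy0).add (((hasDerivAt_id y).add_const 1).mul
      (((hasDerivAt_log (by linarith : y + 1 ≠ 0)).comp_add_const y 1).sub
        (hasDerivAt_log hy0.ne')))
    refine h.congr_deriv ?_
    simp only [Pi.sub_apply, id]
    field_simp
    ring
  have := hmono self_mem_Ici hx hx
  norm_num [phi_one] at this
  linarith

lemma four_mul_log_two_le_mul_phi {x : ℝ} (hx : 1 ≤ x) :
    4 * x * log 2 ≤ (x + 1) * phi x := by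
  have hmono : MonotoneOn (fun y => (y + 1) * phi y - 4 * y * log 2) (Ici 1) := by
    refine monotoneOn_Ici_of_hasDerivAt_of_nonneg
      (f' := fun y => phi y + (y + 1) * (log (y + 1) - log y) - 4 * log 2) (fun y hy => ?_)
      (fun y hy => by linarith [four_mul_log_two_le_phi_add hy.le])
    have h := (((hasDerivAt_id y).add_const 1).mul (hasDerivAt_phi (by linarith))).sub
      (((hasDerivAt_id y).const_mul 4).mul_const (log 2))
    refine h.congr_deriv ?_
    simp only [id, one_mul, mul_one]
  have := hmono self_mem_Ici hx hx
  simp only [phi_one] at this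
  linarith

lemma log_A_eq_slope_phi {r : ℝ} (hr : 0 < r) :
    log (4 ^ (-1 / (r - 1)) * (r + 1) ^ ((r + 1) / (r - 1)) * r ^ (-r / (r - 1))) =
      (phi r - phi 1) / (r - 1) := by
  have hr1 : 0 < r + 1 := by linarith
  rw [log_mul (by positivity) (by positivity), log_mul (by positivity) (by positivity),
    log_rpow (by norm_num) _, log_rpow hr1, log_rpow hr, phi_one,
    show (4 : ℝ) = 2 ^ 2 by norm_num, log_pow]
  simp only [phi, negMulLog]
  push_cast
  ring

/-- For `r > 1`, the constant `A_r = 4^(-1/(r-1)) (r+1)^((r+1)/(r-1)) r^(-r/(r-1))`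
satisfies `1 < A_r < 2`, and moreover `(log 2)/(log A_r) ≤ (r+1)/2`. -/
theorem A_r_bounds (r : ℝ) (hr : 1 < r) :
    1 < 4 ^ (-1 / (r - 1)) * (r + 1) ^ ((r + 1) / (r - 1)) * r ^ (-r / (r - 1)) ∧
    4 ^ (-1 / (r - 1)) * (r + 1) ^ ((r + 1) / (r - 1)) * r ^ (-r / (r - 1)) < 2 ∧
    Real.log 2 /
        Real.log (4 ^ (-1 / (r - 1)) * (r + 1) ^ ((r + 1) / (r - 1)) * r ^ (-r / (r - 1))) ≤
      (r + 1) / 2 := by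
  have hr0 : 0 < r := by linarith
  have hA : 0 < 4 ^ (-1 / (r - 1)) * (r + 1) ^ ((r + 1) / (r - 1)) * r ^ (-r / (r - 1)) := by
    positivity
  have hlog := log_A_eq_slope_phi hr0
  obtain ⟨hpos, hlt⟩ := slope_phi_mem_Ioo hr
  rw [← hlog] at hpos hlt
  refine ⟨(log_pos_iff hA.le).1 hpos, (log_lt_log_iff hA two_pos).1 hlt, ?_⟩
  rw [div_le_iff₀ hpos, hlog, phi_one, mul_div_assoc', le_div_iff₀ (by linarith)]
  linarith [four_mul_log_two_le_mul_phi hr.le]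
end

section
/- Fix r > 1. Among all p, q > 1 satisfying 1/p′ + 1/q′ = 1/r′ (where s′ = s/(s-1)), the constant C(p,q,r) = c_p c_q / c_r, with c_s = s^{1/s}/(s′)^{1/s′}, is minimized exactly when p = q = 2r/(r+1), and its minimal value is C = 2^{2/r} · r · (r+1)^{-(r+1)/r}. In particular, C(p,q,r) ≥ 2^{2/r} r (r+1)^{-(r+1)/r} for all admissible p, q > 1. -/
/-- The conjugate exponent `s′ = s/(s-1)`. -/
noncomputable def conjExp (s : ℝ) : ℝ := s / (s - 1)

/-- The constant `c_s = s^(1/s) / (s′)^(1/s′)`. -/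
noncomputable def youngc (s : ℝ) : ℝ := s ^ (1 / s) / conjExp s ^ (1 / conjExp s)

/-- The sharp Young constant `C(p,q,r) = c_p c_q / c_r`. -/
noncomputable def youngC (p q r : ℝ) : ℝ := youngc p * youngc q / youngc r

/-! With `η = Real.negMulLog` and `x = 1/s`, one has `log c_s = η x - η (1 - x)`. The constraint
reads `1/p + 1/q = 1 + t` with `t = 1/r`, so `1 - 1/p = 1/q - t` and
`log (c_p c_q) = φ (1/p) + φ (1/q)` for `φ x = η x - η (x - t)`. Since `φ' x = log (1 - t/x)` is
increasing, `φ` is strictly convex on `[t, ∞)`, and Jensen at the midpoint shows that `c_p c_q`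
is minimal exactly when `1/p = 1/q = (1 + t)/2`, i.e. `p = q = 2r/(r+1)`. -/

open Real Set

theorem inv_conjExp {s : ℝ} (hs : s ≠ 0) : (conjExp s)⁻¹ = 1 - s⁻¹ := by
  rw [conjExp, inv_div, sub_div, div_self hs, one_div]

theorem rpow_inv_self_eq_exp_negMulLog {s : ℝ} (hs : 0 < s) : s ^ s⁻¹ = exp (negMulLog s⁻¹) := by
  rw [rpow_def_of_pos hs, negMulLog, log_inv]
  ring_nf

theorem youngc_eq_exp {s : ℝ} (hs : 1 < s) :
    youngc s = exp (negMulLog s⁻¹ - negMulLog (1 - s⁻¹)) := by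
  have hs' : 0 < conjExp s := div_pos (by linarith) (by linarith)
  rw [youngc, one_div, one_div, rpow_inv_self_eq_exp_negMulLog (by linarith),
    rpow_inv_self_eq_exp_negMulLog hs', inv_conjExp (by linarith), exp_sub]

theorem strictConvexOn_negMulLog_sub_negMulLog_sub {t : ℝ} (ht : 0 < t) :
    StrictConvexOn ℝ (Ici t) (fun x ↦ negMulLog x - negMulLog (x - t)) := by
  have hderiv : ∀ x ∈ Ioi t,
      deriv (fun x ↦ negMulLog x - negMulLog (x - t)) x = log (x - t) - log x := by
    intro x hx
    have hxt : x - t ≠ 0 := (sub_pos.2 hx).ne'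
    have : HasDerivAt (fun x ↦ negMulLog x - negMulLog (x - t))
        (-log x - 1 - (-log (x - t) - 1)) x :=
      (hasDerivAt_negMulLog (ht.trans hx).ne').sub ((hasDerivAt_negMulLog hxt).comp_sub_const x t)
    rw [this.deriv]
    ring
  refine StrictMonoOn.strictConvexOn_of_deriv (convex_Ici t) (by fun_prop) ?_
  rw [interior_Ici]
  intro x hx y hy hxy
  have hx0 : 0 < x := ht.trans hx
  rw [hderiv x hx, hderiv y hy, ← log_div (sub_pos.2 hx).ne' hx0.ne',
    ← log_div (sub_pos.2 hy).ne' (hx0.trans hxy).ne']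
  refine log_lt_log (div_pos (sub_pos.2 hx) hx0) ?_
  rw [div_lt_div_iff₀ hx0 (hx0.trans hxy)]
  nlinarith

theorem youngc_mul_self_lt_mul {p q : ℝ} (hp : 1 < p) (hq : 1 < q) (hpq : 1 < p⁻¹ + q⁻¹)
    (hne : p ≠ q) : youngc (2 / (p⁻¹ + q⁻¹)) * youngc (2 / (p⁻¹ + q⁻¹)) < youngc p * youngc q := by
  set t := p⁻¹ + q⁻¹ - 1
  have hp' : p⁻¹ < 1 := inv_lt_one_of_one_lt₀ hp
  have hq' : q⁻¹ < 1 := inv_lt_one_of_one_lt₀ hq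
  have hm : 1 < 2 / (p⁻¹ + q⁻¹) := by rw [one_lt_div (by linarith)]; linarith
  have hconv := (strictConvexOn_negMulLog_sub_negMulLog_sub (t := t) (by linarith)).2
    (show t ≤ p⁻¹ by linarith) (show t ≤ q⁻¹ by linarith) (inv_injective.ne hne)
    (by norm_num : (0 : ℝ) < 1 / 2) (by norm_num : (0 : ℝ) < 1 / 2) (by norm_num)
  simp only [smul_eq_mul] at hconv
  rw [youngc_eq_exp hp, youngc_eq_exp hq, youngc_eq_exp hm, ← exp_add, ← exp_add, exp_lt_exp,
    inv_div]
  have h1 : p⁻¹ - t = 1 - q⁻¹ := by ring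
  have h2 : q⁻¹ - t = 1 - p⁻¹ := by ring
  have h3 : 1 / 2 * p⁻¹ + 1 / 2 * q⁻¹ = (p⁻¹ + q⁻¹) / 2 := by ring
  have h4 : (p⁻¹ + q⁻¹) / 2 - t = 1 - (p⁻¹ + q⁻¹) / 2 := by ring
  rw [h1, h2, h3, h4] at hconv
  linarith

theorem youngC_two_mul_div_add_one {r : ℝ} (hr : 1 < r) :
    youngC (2 * r / (r + 1)) (2 * r / (r + 1)) r =
      2 ^ (2 / r) * r * (r + 1) ^ (-(r + 1) / r) := by
  have hr0 : 0 < r := by linarith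
  have hm : 1 < 2 * r / (r + 1) := by rw [one_lt_div (by linarith)]; linarith
  rw [youngC, youngc_eq_exp hm, youngc_eq_exp hr, ← exp_add, ← exp_sub,
    rpow_def_of_pos two_pos, rpow_def_of_pos (by linarith), ← exp_log hr0, ← exp_add, ← exp_add,
    exp_log hr0]
  congr 1
  have e1 : (2 * r / (r + 1))⁻¹ = (r + 1) / (2 * r) := inv_div _ _
  have e2 : 1 - (r + 1) / (2 * r) = (r - 1) / (2 * r) := by field_simp; ring
  have e3 : 1 - r⁻¹ = (r - 1) / r := by field_simp
  simp only [e1, e2, e3, negMulLog, log_inv,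
    log_div (by linarith : r + 1 ≠ 0) (by positivity : 2 * r ≠ 0),
    log_div (by linarith : r - 1 ≠ 0) (by positivity : 2 * r ≠ 0),
    log_div (by linarith : r - 1 ≠ 0) hr0.ne', log_mul two_ne_zero hr0.ne']
  field_simp
  ring

theorem one_div_conjExp_add_one_div_conjExp_eq_iff {p q r : ℝ} (hp : p ≠ 0) (hq : q ≠ 0)
    (hr : r ≠ 0) :
    1 / conjExp p + 1 / conjExp q = 1 / conjExp r ↔ p⁻¹ + q⁻¹ = 1 + r⁻¹ := by
  simp only [one_div, inv_conjExp hp, inv_conjExp hq, inv_conjExp hr]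
  constructor <;> intro h <;> linarith

/-- For fixed `r > 1`, among all `p, q > 1` with `1/p′ + 1/q′ = 1/r′`, the
constant `C(p,q,r)` is minimized exactly at `p = q = 2r/(r+1)`, with minimal
value `2^(2/r) r (r+1)^(-(r+1)/r)`. -/
theorem youngC_minimized (r : ℝ) (hr : 1 < r) :
    (∀ p q : ℝ, 1 < p → 1 < q → 1 / conjExp p + 1 / conjExp q = 1 / conjExp r →
      youngC p q r ≥ 2 ^ (2 / r) * r * (r + 1) ^ (-(r + 1) / r)) ∧
    (1 / conjExp (2 * r / (r + 1)) + 1 / conjExp (2 * r / (r + 1)) = 1 / conjExp r) ∧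
    (youngC (2 * r / (r + 1)) (2 * r / (r + 1)) r =
      2 ^ (2 / r) * r * (r + 1) ^ (-(r + 1) / r)) ∧
    (∀ p q : ℝ, 1 < p → 1 < q → 1 / conjExp p + 1 / conjExp q = 1 / conjExp r →
      youngC p q r = 2 ^ (2 / r) * r * (r + 1) ^ (-(r + 1) / r) →
      p = 2 * r / (r + 1) ∧ q = 2 * r / (r + 1)) := by
  have hmin := youngC_two_mul_div_add_one hr
  set m := 2 * r / (r + 1) with hm_def
  have hr0 : r ≠ 0 := by positivity
  have hm : 1 < m := by rw [one_lt_div (by linarith)]; linarith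
  have hmean {p q : ℝ} (h : p⁻¹ + q⁻¹ = 1 + r⁻¹) : 2 / (p⁻¹ + q⁻¹) = m := by
    rw [h, hm_def]; field_simp
  have hlt {p q : ℝ} (hp : 1 < p) (hq : 1 < q) (h : p⁻¹ + q⁻¹ = 1 + r⁻¹) (hne : p ≠ q) :
      youngC m m r < youngC p q r := by
    have hyoungc_pos : 0 < youngc r := by rw [youngc_eq_exp hr]; exact exp_pos _
    rw [← hmean h]
    refine div_lt_div_of_pos_right (youngc_mul_self_lt_mul hp hq ?_ hne) hyoungc_pos
    rw [h, lt_add_iff_pos_right]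
    positivity
  have hdiag {p : ℝ} (h : p⁻¹ + p⁻¹ = 1 + r⁻¹) : p = m := by
    rw [← hmean h]; field_simp; ring
  have hconstraint {p q : ℝ} (hp : 1 < p) (hq : 1 < q) :
      1 / conjExp p + 1 / conjExp q = 1 / conjExp r ↔ p⁻¹ + q⁻¹ = 1 + r⁻¹ :=
    one_div_conjExp_add_one_div_conjExp_eq_iff (by positivity : p ≠ 0) (by positivity : q ≠ 0) hr0
  rw [← hmin]
  refine ⟨fun p q hp hq h ↦ ?_, (hconstraint hm hm).2 ?_, rfl, fun p q hp hq h he ↦ ?_⟩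
  · rw [hconstraint hp hq] at h
    rcases eq_or_ne p q with rfl | hne
    · rw [← hdiag h]
    · exact (hlt hp hq h hne).le
  · rw [hm_def]; field_simp; ring
  · rw [hconstraint hp hq] at h
    obtain rfl : p = q := by_contra fun hne ↦ (hlt hp hq h hne).ne' he
    exact ⟨hdiag h, hdiag h⟩
end

section
/- Let r > 1 and set α = (r+1)/2 and r′ = r/(r-1). Let x, y > 0 satisfy x + y = 1/r′. Then there exist p, q ≥ 1 with 1/p′ + 1/q′ = 1/r′ such that C^{-α r′} · x^{r′/p′} · y^{r′/q′} ≥ 1/r′, where C = C(p,q,r) = c_p c_q/c_r with c_s = s^{1/s}/(s′)^{1/s′}. -/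
/-!
Take `1/p′ = x` and `1/q′ = y`, i.e. `p = (1 - x)⁻¹` and `q = (1 - y)⁻¹`; then `r = (1 - s)⁻¹`
with `s = x + y`. Writing `η = negMulLog`, one has `log c_{(1 - u)⁻¹} = η (1 - u) - η u`, and
after multiplication by `2 s (1 - s)` the logarithm of the claimed inequality reads
`(2 - s) (η (1 - x) + η (1 - y) - η (1 - s)) ≤ s (η x + η y - η s)`.
The difference of the two sides vanishes at `x = 0` and `x = s` and is concave in `x ∈ [0, s]`:
the sign of its second derivative comes down to `(1 - s) (s - 2x)² ≥ 0`.
-/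

open Real Set

lemma conjExp_inv_one_sub {u : ℝ} (hu : u ≠ 1) : conjExp (1 - u)⁻¹ = u⁻¹ := by
  have : 1 - u ≠ 0 := sub_ne_zero.mpr hu.symm
  rcases eq_or_ne u 0 with rfl | hu0
  · simp [conjExp]
  · rw [conjExp]
    field_simp
    rw [sub_sub_cancel, div_self hu0]

lemma youngc_inv_one_sub {u : ℝ} (hu0 : 0 < u) (hu1 : u < 1) :
    youngc (1 - u)⁻¹ = exp (negMulLog (1 - u) - negMulLog u) := by
  rw [youngc, conjExp_inv_one_sub hu1.ne, rpow_def_of_pos (inv_pos.2 (sub_pos.2 hu1)),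
    rpow_def_of_pos (inv_pos.2 hu0), ← exp_sub]
  congr 1
  simp only [negMulLog, log_inv, one_div, inv_inv]
  ring

lemma hasDerivAt_negMulLog_add_negMulLog_sub {c t : ℝ} (ht : 0 < t) (htc : t < c) :
    HasDerivAt (fun u => negMulLog u + negMulLog (c - u)) (log (c - t) - log t) t := by
  refine ((hasDerivAt_negMulLog ht.ne').add ((hasDerivAt_negMulLog (sub_pos.2 htc).ne').comp t
    ((hasDerivAt_id t).const_sub c))).congr_deriv ?_
  ring

lemma hasDerivAt_log_sub_sub_log {c t : ℝ} (ht : 0 < t) (htc : t < c) :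
    HasDerivAt (fun u => log (c - u) - log u) (-(t⁻¹ + (c - t)⁻¹)) t := by
  refine (((hasDerivAt_log (sub_pos.2 htc).ne').comp t ((hasDerivAt_id t).const_sub c)).sub
    (hasDerivAt_log ht.ne')).congr_deriv ?_
  ring

lemma concaveOn_young_entropy {s : ℝ} (hs0 : 0 < s) (hs1 : s < 1) :
    ConcaveOn ℝ (Icc 0 s) fun t => s * (negMulLog t + negMulLog (s - t)) -
      (2 - s) * (negMulLog (1 - t) + negMulLog (2 - s - (1 - t))) := by
  refine concaveOn_of_hasDerivWithinAt2_nonpos (convex_Icc 0 s) (by fun_prop)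
    (f' := fun t => s * (log (s - t) - log t) + (2 - s) * (log (2 - s - (1 - t)) - log (1 - t)))
    (f'' := fun t => (2 - s) * ((1 - t)⁻¹ + (2 - s - (1 - t))⁻¹) - s * (t⁻¹ + (s - t)⁻¹))
    ?_ ?_ ?_ <;> simp only [interior_Icc] <;> rintro t ⟨ht0, hts⟩
  · have h1t : 1 - t < 2 - s := by linarith
    refine (((hasDerivAt_negMulLog_add_negMulLog_sub ht0 hts).const_mul s).sub
      (((hasDerivAt_negMulLog_add_negMulLog_sub (by linarith) h1t).comp t
        ((hasDerivAt_id t).const_sub 1)).const_mul (2 - s))).hasDerivWithinAt.congr_deriv ?_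
    ring
  · have h1t : 1 - t < 2 - s := by linarith
    refine (((hasDerivAt_log_sub_sub_log ht0 hts).const_mul s).add
      (((hasDerivAt_log_sub_sub_log (by linarith) h1t).comp t
        ((hasDerivAt_id t).const_sub 1)).const_mul (2 - s))).hasDerivWithinAt.congr_deriv ?_
    ring
  · have h1s : 0 < 1 - s := by linarith
    have h1t : 0 < 1 - t := by linarith
    have hst : 0 < s - t := by linarith
    rw [sub_nonpos, show 2 - s - (1 - t) = 1 - s + t by ring,
      show s * (t⁻¹ + (s - t)⁻¹) = s ^ 2 / (t * (s - t)) by field_simp; ring,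
      show (2 - s) * ((1 - t)⁻¹ + (1 - s + t)⁻¹) = (2 - s) ^ 2 / ((1 - t) * (1 - s + t)) by
        field_simp; ring, div_le_div_iff₀ (by positivity) (by positivity)]
    nlinarith [mul_nonneg h1s.le (sq_nonneg (s - 2 * t))]

lemma young_entropy_le {x y : ℝ} (hx : 0 ≤ x) (hy : 0 ≤ y) (hxy0 : 0 < x + y)
    (hxy1 : x + y < 1) :
    (2 - (x + y)) * (negMulLog (1 - x) + negMulLog (1 - y) - negMulLog (1 - (x + y))) ≤
      (x + y) * (negMulLog x + negMulLog y - negMulLog (x + y)) := by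
  have h := (concaveOn_young_entropy hxy0 hxy1).min_le_of_mem_Icc (left_mem_Icc.2 hxy0.le)
    (right_mem_Icc.2 hxy0.le) ⟨hx, by linarith⟩
  simp only [sub_zero, add_sub_cancel_left, sub_self, negMulLog_zero, negMulLog_one,
    show 2 - (x + y) - 1 = 1 - (x + y) by ring,
    show 2 - (x + y) - (1 - (x + y)) = 1 by ring, show 2 - (x + y) - (1 - x) = 1 - y by ring,
    add_zero, zero_add, min_self] at h
  linarith

/-- Key lemma: for `r > 1`, `α = (r+1)/2`, and `x, y > 0` with `x + y = 1/r′`,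
there exist `p, q ≥ 1` with `1/p′ + 1/q′ = 1/r′` such that
`C^(-α r′) x^(r′/p′) y^(r′/q′) ≥ 1/r′`. -/
theorem exists_young_exponents (r : ℝ) (hr : 1 < r) (x y : ℝ)
    (hx : 0 < x) (hy : 0 < y) (hxy : x + y = 1 / conjExp r) :
    ∃ p q : ℝ, 1 ≤ p ∧ 1 ≤ q ∧ 1 / conjExp p + 1 / conjExp q = 1 / conjExp r ∧
      youngC p q r ^ (-((r + 1) / 2 * conjExp r)) * x ^ (conjExp r / conjExp p) *
          y ^ (conjExp r / conjExp q) ≥ 1 / conjExp r := by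
  obtain ⟨s, hs1, rfl⟩ : ∃ s, s < 1 ∧ r = (1 - s)⁻¹ :=
    ⟨1 - r⁻¹, by simp [inv_pos.2 (zero_lt_one.trans hr)], by simp⟩
  rw [conjExp_inv_one_sub hs1.ne, one_div, inv_inv] at hxy ⊢
  subst hxy
  have hs0 : 0 < x + y := add_pos hx hy
  have h1s : 0 < 1 - (x + y) := sub_pos.2 hs1
  have hx1 : x < 1 := by linarith
  have hy1 : y < 1 := by linarith
  refine ⟨(1 - x)⁻¹, (1 - y)⁻¹, (one_le_inv₀ (by linarith)).2 (by linarith),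
    (one_le_inv₀ (by linarith)).2 (by linarith),
    by simp [conjExp_inv_one_sub hx1.ne, conjExp_inv_one_sub hy1.ne], ?_⟩
  rw [conjExp_inv_one_sub hx1.ne, conjExp_inv_one_sub hy1.ne, youngC, youngc_inv_one_sub hx hx1,
    youngc_inv_one_sub hy hy1, youngc_inv_one_sub hs0 hs1, ← exp_add, ← exp_sub, ← exp_mul,
    rpow_def_of_pos hx, rpow_def_of_pos hy, ← exp_add, ← exp_add, ge_iff_le,
    ← log_le_iff_le_exp hs0, ← sub_nonneg]
  have key := young_entropy_le hx.le hy.le hs0 hs1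
  refine (div_nonneg (sub_nonneg.2 key)
    (by positivity : (0 : ℝ) ≤ 2 * (x + y) * (1 - (x + y)))).trans_eq ?_
  simp only [negMulLog]
  field_simp
  ring
end

section
/- Let 0 < c < 1 and β ≥ 2/c − 1. Define ψ(x) = (1−x)^{β(1−x)} (1−y)^{β(1−y)} / (x^x y^y) for 0 ≤ x ≤ c, where y = c − x (with the convention 0^0 = 1). Then the minimum of ψ on [0, c] is attained either at an endpoint x = 0 or x = c, or at the center x = c/2; that is, min_{0 ≤ x ≤ c} ψ(x) = min{ψ(0), ψ(c/2), ψ(c)}. -/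
/-!
Write `ψ = exp f` on `[0, c]`; `f` is symmetric about `c/2`, so it suffices to treat `[0, c/2]`.
A function whose derivative changes sign at most once, from `+` to `-`, is minimal at an endpoint.
The derivative `g = f'` vanishes at `c/2`, and
`g' = ((β(2-c) - c) q - c(1-c)) / (q (1-x)(1-c+x))` with `q = x(c-x)`. As `q` increases on
`(0, c/2]` and `c(1-c) > 0`, `g'` changes sign at most once there, from `-` to `+`. Applied to `-g`
on `[s, c/2]`, the principle gives `g ≤ max (g s) 0`, so `g` changes sign at most once, from `+`
to `-`, and the principle applied to `f` on `[0, c/2]` concludes.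
-/

open Real Set

/-- The function `ψ(x) = (1-x)^(β(1-x)) (1-y)^(β(1-y)) / (x^x y^y)` with
`y = c - x`, using real powers (`Real.rpow`, so that `0^0 = 1`). -/
noncomputable def psiFn (c β x : ℝ) : ℝ :=
  ((1 - x) ^ (β * (1 - x)) * (1 - (c - x)) ^ (β * (1 - (c - x)))) /
    (x ^ x * (c - x) ^ (c - x))

theorem min_le_of_hasDerivAt_of_sign_change {f f' : ℝ → ℝ} {a b : ℝ}
    (hf : ContinuousOn f (Icc a b)) (hf' : ∀ t ∈ Ioo a b, HasDerivAt f (f' t) t)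
    (hsign : ∀ s ∈ Ioo a b, ∀ t ∈ Ioo a b, s ≤ t → f' s < 0 → f' t ≤ 0) :
    ∀ x ∈ Icc a b, min (f a) (f b) ≤ f x := by
  rintro x ⟨hax, hxb⟩
  by_cases hinc : ∀ t ∈ Ioo a x, 0 ≤ f' t
  · have hmono : MonotoneOn f (Icc a x) := by
      refine monotoneOn_of_hasDerivWithinAt_nonneg (convex_Icc a x)
        (hf.mono (Icc_subset_Icc_right hxb)) (fun t ht => ?_) (by simpa only [interior_Icc])
      rw [interior_Icc] at ht ⊢
      exact (hf' t ⟨ht.1, ht.2.trans_le hxb⟩).hasDerivWithinAt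
    exact (min_le_left _ _).trans (hmono (left_mem_Icc.2 hax) (right_mem_Icc.2 hax) hax)
  · push Not at hinc
    obtain ⟨s, hs, hs_neg⟩ := hinc
    have hs' : s ∈ Ioo a b := ⟨hs.1, hs.2.trans_le hxb⟩
    have hanti : AntitoneOn f (Icc x b) := by
      refine antitoneOn_of_hasDerivWithinAt_nonpos (f' := f') (convex_Icc x b)
        (hf.mono (Icc_subset_Icc_left hax)) (fun t ht => ?_) (fun t ht => ?_) <;>
        rw [interior_Icc] at ht
      · rw [interior_Icc]
        exact (hf' t ⟨hax.trans_lt ht.1, ht.2⟩).hasDerivWithinAt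
      · exact hsign s hs' t ⟨hax.trans_lt ht.1, ht.2⟩ (hs.2.trans ht.1).le hs_neg
    exact (min_le_right _ _).trans (hanti (left_mem_Icc.2 hxb) (right_mem_Icc.2 hxb) hxb)

/-- `log ψ`; since `Real.log 0 = 0`, the terms `0 * log 0` vanish, matching `0 ^ 0 = 1`. -/
noncomputable def logPsi (c β x : ℝ) : ℝ :=
  β * ((1 - x) * log (1 - x) + (1 - (c - x)) * log (1 - (c - x)))
    - (x * log x + (c - x) * log (c - x))

noncomputable def logPsiDeriv (c β x : ℝ) : ℝ :=
  β * (log (1 - (c - x)) - log (1 - x)) + (log (c - x) - log x)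

noncomputable def logPsiDeriv2 (c β x : ℝ) : ℝ :=
  β * ((1 - (c - x))⁻¹ + (1 - x)⁻¹) - ((c - x)⁻¹ + x⁻¹)

theorem continuous_logPsi (c β : ℝ) : Continuous (logPsi c β) := by
  unfold logPsi
  fun_prop

theorem psiFn_sub_self (c β x : ℝ) : psiFn c β (c - x) = psiFn c β x := by
  rw [psiFn, psiFn, sub_sub_cancel]
  ring

theorem rpow_self_eq_exp_mul_log {x : ℝ} (hx : 0 ≤ x) : x ^ x = exp (x * log x) := by
  rcases hx.eq_or_lt with rfl | hx
  · simp
  · rw [rpow_def_of_pos hx, mul_comm]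

theorem logPsiDeriv_half (c β : ℝ) : logPsiDeriv c β (c / 2) = 0 := by
  rw [logPsiDeriv, show c - c / 2 = c / 2 by ring]
  ring

section

variable {c β x : ℝ}

theorem psiFn_eq_exp_logPsi (hc1 : c < 1) (hx : x ∈ Icc 0 c) :
    psiFn c β x = exp (logPsi c β x) := by
  obtain ⟨hx0, hxc⟩ := hx
  rw [psiFn, rpow_def_of_pos (by linarith), rpow_def_of_pos (by linarith),
    rpow_self_eq_exp_mul_log hx0, rpow_self_eq_exp_mul_log (sub_nonneg.2 hxc), ← exp_add,
    ← exp_add, ← exp_sub, logPsi]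
  ring_nf

theorem hasDerivAt_logPsi (hx0 : 0 < x) (hxc : x < c) (hc1 : c < 1) :
    HasDerivAt (logPsi c β) (logPsiDeriv c β x) x := by
  have hu : HasDerivAt (fun t => 1 - t) (-1) x := (hasDerivAt_id' x).const_sub 1
  have hv : HasDerivAt (fun t => 1 - (c - t)) 1 x := by
    simpa using ((hasDerivAt_id' x).const_sub c).const_sub 1
  have hw : HasDerivAt (fun t => c - t) (-1) x := (hasDerivAt_id' x).const_sub c
  have hmul_log {u : ℝ → ℝ} {u' : ℝ} (hu : HasDerivAt u u' x) (hux : 0 < u x) :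
      HasDerivAt (fun t => u t * log (u t)) ((log (u x) + 1) * u') x :=
    (hasDerivAt_mul_log hux.ne').comp x hu
  have h := (((hmul_log hu (by linarith)).add (hmul_log hv (by linarith))).const_mul β).sub
    ((hmul_log (hasDerivAt_id' x) hx0).add (hmul_log hw (by linarith)))
  refine (h : HasDerivAt (logPsi c β) _ x).congr_deriv ?_
  rw [logPsiDeriv]
  ring

theorem hasDerivAt_logPsiDeriv (hx0 : 0 < x) (hxc : x < c) (hc1 : c < 1) :
    HasDerivAt (logPsiDeriv c β) (logPsiDeriv2 c β x) x := by
  have hu : HasDerivAt (fun t => 1 - t) (-1) x := (hasDerivAt_id' x).const_sub 1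
  have hv : HasDerivAt (fun t => 1 - (c - t)) 1 x := by
    simpa using ((hasDerivAt_id' x).const_sub c).const_sub 1
  have hw : HasDerivAt (fun t => c - t) (-1) x := (hasDerivAt_id' x).const_sub c
  have h := (((hv.log (by linarith)).sub (hu.log (by linarith))).const_mul β).add
    ((hw.log (by linarith)).sub ((hasDerivAt_id' x).log hx0.ne'))
  refine (h : HasDerivAt (logPsiDeriv c β) _ x).congr_deriv ?_
  rw [logPsiDeriv2]
  ring

theorem logPsiDeriv2_eq (hx0 : 0 < x) (hxc : x < c) (hc1 : c < 1) :
    logPsiDeriv2 c β x = ((β * (2 - c) - c) * (x * (c - x)) - c * (1 - c)) /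
      (x * (c - x) * ((1 - x) * (1 - (c - x)))) := by
  have : c - x ≠ 0 := by linarith
  have : 1 - x ≠ 0 := by linarith
  have : 1 - (c - x) ≠ 0 := by linarith
  rw [logPsiDeriv2]
  field_simp
  ring

theorem logPsiDeriv2_nonneg_of_pos (hc1 : c < 1) {s t : ℝ} (hs0 : 0 < s) (hst : s ≤ t)
    (htc : t ≤ c / 2) (hs : 0 < logPsiDeriv2 c β s) : 0 ≤ logPsiDeriv2 c β t := by
  have hc0 : 0 < c := by linarith
  have hden {u : ℝ} (hu0 : 0 < u) (huc : u ≤ c / 2) :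
      0 < u * (c - u) * ((1 - u) * (1 - (c - u))) := by
    have : 0 < c - u := by linarith
    have : 0 < 1 - u := by linarith
    have : 0 < 1 - (c - u) := by linarith
    positivity
  rw [logPsiDeriv2_eq hs0 (by linarith) hc1] at hs
  rw [logPsiDeriv2_eq (hs0.trans_le hst) (by linarith) hc1]
  have hnum := (div_pos_iff_of_pos_right (hden hs0 (hst.trans htc))).1 hs
  refine div_nonneg ?_ (hden (hs0.trans_le hst) htc).le
  have hq : s * (c - s) ≤ t * (c - t) := by nlinarith
  have hqs : 0 < s * (c - s) := by nlinarith
  have hD : 0 < β * (2 - c) - c := by nlinarith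
  nlinarith

theorem logPsiDeriv_nonpos_of_neg (hc1 : c < 1) {s t : ℝ} (hs0 : 0 < s) (hst : s ≤ t)
    (htc : t ≤ c / 2) (hs : logPsiDeriv c β s < 0) : logPsiDeriv c β t ≤ 0 := by
  have hderiv : ∀ u ∈ Ioo s (c / 2),
      HasDerivAt (fun x => -logPsiDeriv c β x) (-logPsiDeriv2 c β u) u :=
    fun u hu => (hasDerivAt_logPsiDeriv (hs0.trans hu.1) (by linarith [hu.1, hu.2]) hc1).neg
  have hcont : ContinuousOn (fun x => -logPsiDeriv c β x) (Icc s (c / 2)) := fun u hu =>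
    (hasDerivAt_logPsiDeriv (hs0.trans_le hu.1) (by linarith [hu.1, hu.2]) hc1).continuousAt.neg
      |>.continuousWithinAt
  have hsign : ∀ u ∈ Ioo s (c / 2), ∀ v ∈ Ioo s (c / 2), u ≤ v →
      -logPsiDeriv2 c β u < 0 → -logPsiDeriv2 c β v ≤ 0 := fun u hu v hv huv hu' =>
    neg_nonpos.2 (logPsiDeriv2_nonneg_of_pos hc1 (hs0.trans hu.1) huv hv.2.le (neg_neg_iff_pos.1 hu'))
  have key := min_le_of_hasDerivAt_of_sign_change hcont hderiv hsign t ⟨hst, htc⟩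
  rw [logPsiDeriv_half, neg_zero] at key
  rcases min_le_iff.1 key with h | h <;> linarith

theorem min_le_logPsi_of_le_half (hc1 : c < 1) :
    ∀ x ∈ Icc 0 (c / 2), min (logPsi c β 0) (logPsi c β (c / 2)) ≤ logPsi c β x :=
  min_le_of_hasDerivAt_of_sign_change (continuous_logPsi c β).continuousOn
    (fun t ht => hasDerivAt_logPsi ht.1 (by linarith [ht.1, ht.2]) hc1)
    (fun s hs t ht hst => logPsiDeriv_nonpos_of_neg hc1 hs.1 hst ht.2.le)

end

theorem psi_min_endpoints_or_center_general (c β : ℝ) (hc1 : c < 1) :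
    ∀ x ∈ Set.Icc (0 : ℝ) c,
      min (min (psiFn c β 0) (psiFn c β (c / 2))) (psiFn c β c) ≤ psiFn c β x := by
  intro x hx
  wlog hxc : x ≤ c / 2 generalizing x
  · rw [← psiFn_sub_self c β x]
    exact this (c - x) ⟨by linarith [hx.2], by linarith [hx.1]⟩ (by linarith)
  have hc : 0 ≤ c := hx.1.trans hx.2
  rw [psiFn_eq_exp_logPsi hc1 ⟨le_rfl, hc⟩, psiFn_eq_exp_logPsi hc1 ⟨by linarith, by linarith⟩,
    psiFn_eq_exp_logPsi hc1 hx, ← exp_monotone.map_min]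
  exact (min_le_left _ _).trans (exp_le_exp.2 (min_le_logPsi_of_le_half hc1 x ⟨hx.1, hxc⟩))

/-- Calculus lemma: for `0 < c < 1` and `β ≥ 2/c - 1`, the minimum of `ψ` on
`[0, c]` is attained either at an endpoint `x = 0`, `x = c`, or at the center
`x = c/2`; i.e. `min {ψ(0), ψ(c/2), ψ(c)} ≤ ψ(x)` for all `x ∈ [0, c]`. -/
theorem psi_min_endpoints_or_center (c β : ℝ) (hc0 : 0 < c) (hc1 : c < 1)
    (hβ : 2 / c - 1 ≤ β) :
    ∀ x ∈ Set.Icc (0 : ℝ) c,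
      min (min (psiFn c β 0) (psiFn c β (c / 2))) (psiFn c β c) ≤ psiFn c β x :=
  psi_min_endpoints_or_center_general c β hc1
end

section
/- Let x, y > 0 with x + y < 1, and set c = x + y and β = (2 − c)/c. Then (1−x)^{β(1−x)} (1−y)^{β(1−y)} / (x^x y^y) ≥ (1−c)^{β(1−c)} / c^c. Equivalently, with α = (r+1)/2 where c = (r−1)/r: ((x+y)^{x+y}/(x^x y^y))^{α−1} ≥ ((1−x−y)^{1−x−y}/((1−x)^{1−x}(1−y)^{1−y}))^{α}. -/
/-!
With `H = negMulLog` and `c = x + y`, taking logarithms turns both inequalities into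
`(2 - c) (H(1-x) + H(1-y) - H(1-c)) ≤ c (H(x) + H(y) - H(c))`.
For fixed `c`, the difference of the two sides is a function of `x ∈ [0, c]` that vanishes at both
endpoints and is concave, since its second derivative is `-(1-c)(2x-c)²/(x(c-x)(1-x)(1-c+x))`.
-/

open Real Set

noncomputable def entropyGap (c u : ℝ) : ℝ :=
  c * (negMulLog u + negMulLog (c - u) - negMulLog c) -
    (2 - c) * (negMulLog (1 - u) + negMulLog (1 - c + u) - negMulLog (1 - c))

section

variable {c u : ℝ}

lemma hasDerivAt_entropyGap (hu : u ≠ 0) (hcu : c - u ≠ 0) (hu₁ : 1 - u ≠ 0)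
    (hcu₁ : 1 - c + u ≠ 0) :
    HasDerivAt (entropyGap c)
      (c * (log (c - u) - log u) + (2 - c) * (log (1 - c + u) - log (1 - u))) u := by
  have hsub (a : ℝ) (h : a - u ≠ 0) :
      HasDerivAt (fun v ↦ negMulLog (a - v)) ((-log (a - u) - 1) * -1) u :=
    (hasDerivAt_negMulLog h).comp u ((hasDerivAt_id u).const_sub a)
  have hadd : HasDerivAt (fun v ↦ negMulLog (1 - c + v)) ((-log (1 - c + u) - 1) * 1) u :=
    (hasDerivAt_negMulLog hcu₁).comp u ((hasDerivAt_id u).const_add (1 - c))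
  exact ((((hasDerivAt_negMulLog hu).add (hsub c hcu)).sub_const (negMulLog c)).const_mul c
    |>.sub <| (((hsub 1 hu₁).add hadd).sub_const (negMulLog (1 - c))).const_mul (2 - c))
    |>.congr_deriv (by ring)

lemma hasDerivAt_deriv_entropyGap (hu : u ≠ 0) (hcu : c - u ≠ 0) (hu₁ : 1 - u ≠ 0)
    (hcu₁ : 1 - c + u ≠ 0) :
    HasDerivAt (fun v ↦ c * (log (c - v) - log v) + (2 - c) * (log (1 - c + v) - log (1 - v)))
      (-c * (1 / (c - u) + 1 / u) + (2 - c) * (1 / (1 - c + u) + 1 / (1 - u))) u := by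
  have hid := hasDerivAt_id' u
  exact ((((hid.const_sub c).log hcu).sub (hid.log hu)).const_mul c).add
    ((((hid.const_add (1 - c)).log hcu₁).sub ((hid.const_sub 1).log hu₁)).const_mul (2 - c))
    |>.congr_deriv (by ring)

lemma concaveOn_entropyGap (hc : c < 1) : ConcaveOn ℝ (Icc 0 c) (entropyGap c) := by
  have hpos {u : ℝ} (hu : u ∈ interior (Icc 0 c)) :
      0 < u ∧ 0 < c - u ∧ 0 < 1 - u ∧ 0 < 1 - c + u := by
    rw [interior_Icc] at hu
    exact ⟨hu.1, sub_pos.2 hu.2, by linarith [hu.2], by linarith [hu.1]⟩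
  refine concaveOn_of_hasDerivWithinAt2_nonpos (convex_Icc 0 c)
    (by unfold entropyGap; fun_prop)
    (fun u hu ↦ have ⟨hu, hcu, hu₁, hcu₁⟩ := hpos hu
      (hasDerivAt_entropyGap hu.ne' hcu.ne' hu₁.ne' hcu₁.ne').hasDerivWithinAt)
    (fun u hu ↦ have ⟨hu, hcu, hu₁, hcu₁⟩ := hpos hu
      (hasDerivAt_deriv_entropyGap hu.ne' hcu.ne' hu₁.ne' hcu₁.ne').hasDerivWithinAt)
    (fun u hu ↦ ?_)
  obtain ⟨hu, hcu, hu₁, hcu₁⟩ := hpos hu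
  have key : -c * (1 / (c - u) + 1 / u) + (2 - c) * (1 / (1 - c + u) + 1 / (1 - u)) =
      -((1 - c) * (2 * u - c) ^ 2) / (u * (c - u) * (1 - u) * (1 - c + u)) := by
    field_simp
    ring
  rw [key, neg_div, neg_nonpos]
  have : 0 < 1 - c := sub_pos.2 hc
  positivity

lemma entropyGap_nonneg (hc : c < 1) (hu : u ∈ Icc 0 c) : 0 ≤ entropyGap c u := by
  have hc₀ : 0 ≤ c := hu.1.trans hu.2
  simpa [entropyGap] using
    (concaveOn_entropyGap hc).min_le_of_mem_Icc (left_mem_Icc.2 hc₀) (right_mem_Icc.2 hc₀) hu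

end

lemma mixing_entropy_comparison {x y : ℝ} (hx : 0 ≤ x) (hy : 0 ≤ y) (hxy : x + y < 1) :
    (2 - (x + y)) * (negMulLog (1 - x) + negMulLog (1 - y) - negMulLog (1 - (x + y))) ≤
      (x + y) * (negMulLog x + negMulLog y - negMulLog (x + y)) := by
  have h := entropyGap_nonneg hxy (u := x) ⟨hx, by linarith⟩
  rw [entropyGap, add_sub_cancel_left, show 1 - (x + y) + x = 1 - y by ring] at h
  linarith

lemma log_rpow_self {a : ℝ} (ha : 0 < a) : log (a ^ a) = -negMulLog a := by
  rw [log_rpow ha, negMulLog]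
  ring

lemma log_rpow_mul_self {a : ℝ} (ha : 0 < a) (b : ℝ) :
    log (a ^ (b * a)) = -(b * negMulLog a) := by
  rw [log_rpow ha, negMulLog]
  ring

lemma log_rpow_self_div {a b c : ℝ} (ha : 0 < a) (hb : 0 < b) (hc : 0 < c) :
    log (a ^ a / (b ^ b * c ^ c)) = negMulLog b + negMulLog c - negMulLog a := by
  rw [log_div (by positivity) (by positivity), log_mul (by positivity) (by positivity),
    log_rpow_self ha, log_rpow_self hb, log_rpow_self hc]
  ring

lemma key_inequality_beta_form {x y : ℝ} (hx : 0 < x) (hy : 0 < y) (hxy : x + y < 1) :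
    ((1 - x) ^ ((2 - (x + y)) / (x + y) * (1 - x)) *
        (1 - y) ^ ((2 - (x + y)) / (x + y) * (1 - y))) / (x ^ x * y ^ y) ≥
      (1 - (x + y)) ^ ((2 - (x + y)) / (x + y) * (1 - (x + y))) / (x + y) ^ (x + y) := by
  have hc : 0 < x + y := by positivity
  have hx₁ : 0 < 1 - x := by linarith
  have hy₁ : 0 < 1 - y := by linarith
  have hc₁ : 0 < 1 - (x + y) := by linarith
  rw [ge_iff_le, ← log_le_log_iff (by positivity) (by positivity),
    log_div (by positivity) (by positivity), log_div (by positivity) (by positivity),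
    log_mul (by positivity) (by positivity), log_mul (by positivity) (by positivity),
    log_rpow_mul_self hx₁, log_rpow_mul_self hy₁, log_rpow_mul_self hc₁,
    log_rpow_self hc, log_rpow_self hx, log_rpow_self hy]
  have key : (2 - (x + y)) / (x + y) *
      (negMulLog (1 - x) + negMulLog (1 - y) - negMulLog (1 - (x + y))) ≤
        negMulLog x + negMulLog y - negMulLog (x + y) := by
    rw [div_mul_eq_mul_div, div_le_iff₀' hc]
    exact mixing_entropy_comparison hx.le hy.le hxy
  linarith

lemma key_inequality_alpha_form {x y : ℝ} (hx : 0 < x) (hy : 0 < y) (hxy : x + y < 1) :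
    ((x + y) ^ (x + y) / (x ^ x * y ^ y)) ^ ((2 - (x + y)) / (2 * (1 - (x + y))) - 1) ≥
      ((1 - x - y) ^ (1 - x - y) / ((1 - x) ^ (1 - x) * (1 - y) ^ (1 - y))) ^
        ((2 - (x + y)) / (2 * (1 - (x + y)))) := by
  have hx₁ : 0 < 1 - x := by linarith
  have hy₁ : 0 < 1 - y := by linarith
  have hc₁ : 0 < 1 - (x + y) := by linarith
  have hα : (2 - (x + y)) / (2 * (1 - (x + y))) - 1 = (x + y) / (2 * (1 - (x + y))) := by
    field_simp
    ring
  rw [ge_iff_le, sub_sub, ← log_le_log_iff (by positivity) (by positivity),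
    log_rpow (by positivity), log_rpow (by positivity),
    log_rpow_self_div (by positivity) hx hy, log_rpow_self_div hc₁ hx₁ hy₁,
    hα, div_mul_eq_mul_div, div_mul_eq_mul_div, div_le_div_iff_of_pos_right (by positivity)]
  exact mixing_entropy_comparison hx.le hy.le hxy

/-- For `x, y > 0` with `x + y < 1`, setting `c = x + y` and `β = (2-c)/c`,
one has `(1-x)^(β(1-x)) (1-y)^(β(1-y)) / (x^x y^y) ≥ (1-c)^(β(1-c)) / c^c`;
equivalently, with `α = (r+1)/2 = (2-c)/(2(1-c))` where `c = (r-1)/r`,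
`((x+y)^(x+y)/(x^x y^y))^(α-1) ≥ ((1-x-y)^(1-x-y)/((1-x)^(1-x)(1-y)^(1-y)))^α`. -/
theorem key_inequality (x y : ℝ) (hx : 0 < x) (hy : 0 < y) (hxy : x + y < 1) :
    ((1 - x) ^ ((2 - (x + y)) / (x + y) * (1 - x)) *
        (1 - y) ^ ((2 - (x + y)) / (x + y) * (1 - y))) / (x ^ x * y ^ y) ≥
      (1 - (x + y)) ^ ((2 - (x + y)) / (x + y) * (1 - (x + y))) / (x + y) ^ (x + y) ∧
    ((x + y) ^ (x + y) / (x ^ x * y ^ y)) ^ ((2 - (x + y)) / (2 * (1 - (x + y))) - 1) ≥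
      ((1 - x - y) ^ (1 - x - y) / ((1 - x) ^ (1 - x) * (1 - y) ^ (1 - y))) ^
        ((2 - (x + y)) / (2 * (1 - (x + y)))) :=
  ⟨key_inequality_beta_form hx hy hxy, key_inequality_alpha_form hx hy hxy⟩
end

section
/- For every r > 1 there exists p > 2 such that 4 · r^{-r(p-2)/(p(r-1))} · Γ(1/p) · Γ(2 − 1/p) < 2π; that is, the inequality 2π ≤ 4 r^{-r(p-2)/(p(r-1))} Γ(1/p) Γ(2 − 1/p), which holds with equality at p = 2, fails for some p > 2 arbitrarily close to 2. -/
open Real Filter Topology Set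

/-!
With `k = r log r / (r - 1)` the power of `r` is `exp (-k (p - 2) / p)`, and the reflection formula
in the form `Γ(s) Γ(2 - s) = (1 - s) π / sin (π s)` turns the failure of the inequality at `p` into
`2 (1 - 1/p) exp (-k (p - 2) / p) < sin (π / p)`. Both sides equal `1` at `p = 2`, and the
derivative of their difference there is `(k - 1) / 2`, which is positive because
`r - 1 < r log r`.
-/

lemma Real.Gamma_mul_Gamma_two_sub {s : ℝ} (hs : s ≠ 1) :
    Gamma s * Gamma (2 - s) = (1 - s) * (π / sin (π * s)) := by
  rw [show 2 - s = (1 - s) + 1 by ring, Gamma_add_one (sub_ne_zero.mpr hs.symm), mul_left_comm,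
    Gamma_mul_Gamma_one_sub]

lemma HasDerivAt.eventually_nhdsGT_lt {f : ℝ → ℝ} {f' x : ℝ} (hf : HasDerivAt f f' x)
    (hf' : 0 < f') : ∀ᶠ y in 𝓝[>] x, f x < f y := by
  have hslope := (hasDerivAt_iff_tendsto_slope.mp hf).mono_left (nhdsGT_le_nhdsNE x)
  filter_upwards [hslope.eventually (eventually_gt_nhds hf'), self_mem_nhdsWithin] with y hy hxy
  rw [slope_def_field] at hy
  exact sub_pos.mp ((div_pos_iff_of_pos_right (sub_pos.mpr hxy)).mp hy)

lemma eventually_two_mul_one_sub_one_div_mul_exp_lt_sin {k : ℝ} (hk : 1 < k) :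
    ∀ᶠ p in 𝓝[>] 2, 2 * (1 - 1 / p) * exp (-(k * (p - 2)) / p) < sin (π / p) := by
  have hid := hasDerivAt_id' (2 : ℝ)
  have hsin : HasDerivAt (fun p ↦ sin (π / p)) 0 2 :=
    ((hasDerivAt_const (2 : ℝ) π).div hid two_ne_zero).sin.congr_deriv (by simp)
  have hexp : HasDerivAt (fun p ↦ exp (-(k * (p - 2)) / p)) (-(k / 2)) 2 :=
    (((hid.sub_const 2).const_mul k).neg.div hid two_ne_zero).exp.congr_deriv (by norm_num; ring)
  have hlin : HasDerivAt (fun p : ℝ ↦ 2 * (1 - 1 / p)) (1 / 2) 2 :=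
    (((hasDerivAt_const (2 : ℝ) 1).div hid two_ne_zero).const_sub 1 |>.const_mul 2).congr_deriv
      (by norm_num)
  have hderiv := (hsin.sub (hlin.mul hexp)).congr_deriv (show _ = (k - 1) / 2 by norm_num; ring)
  filter_upwards [hderiv.eventually_nhdsGT_lt (by linarith)] with p hp
  norm_num [-one_div] at hp
  linarith

lemma eventually_four_mul_exp_mul_Gamma_mul_Gamma_lt {k : ℝ} (hk : 1 < k) :
    ∀ᶠ p in 𝓝[>] 2,
      4 * exp (-(k * (p - 2)) / p) * Gamma (1 / p) * Gamma (2 - 1 / p) < 2 * π := by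
  filter_upwards [eventually_two_mul_one_sub_one_div_mul_exp_lt_sin hk, self_mem_nhdsWithin]
    with p hlt (hp : 2 < p)
  have hsin : 0 < sin (π / p) :=
    sin_pos_of_pos_of_lt_pi (by positivity)
      ((div_lt_iff₀ (by linarith)).mpr (by nlinarith [pi_pos]))
  have hp1 : 1 / p ≠ 1 := by rw [ne_eq, div_eq_one_iff_eq (by linarith)]; linarith
  rw [mul_assoc, Gamma_mul_Gamma_two_sub hp1, mul_one_div, ← sub_pos]
  have : 2 * π - 4 * exp (-(k * (p - 2)) / p) * ((1 - 1 / p) * (π / sin (π / p)))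
      = 2 * π / sin (π / p) * (sin (π / p) - 2 * (1 - 1 / p) * exp (-(k * (p - 2)) / p)) := by
    field_simp; ring
  rw [this]
  exact mul_pos (div_pos (by positivity) hsin) (sub_pos.mpr hlt)

/-- For every `r > 1`, the inequality
`2π ≤ 4 r^(-r(p-2)/(p(r-1))) Γ(1/p) Γ(2-1/p)`, which holds with equality at
`p = 2`, fails for some `p > 2` arbitrarily close to `2`. -/
theorem gamma_inequality_fails_near_two (r : ℝ) (hr : 1 < r) :
    4 * Real.Gamma (1 / 2) * Real.Gamma (2 - 1 / 2) = 2 * π ∧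
    ∀ ε : ℝ, 0 < ε → ∃ p : ℝ, 2 < p ∧ p < 2 + ε ∧
      4 * r ^ (-(r * (p - 2)) / (p * (r - 1))) * Real.Gamma (1 / p) *
          Real.Gamma (2 - 1 / p) < 2 * π := by
  refine ⟨?_, fun ε hε ↦ ?_⟩
  · rw [mul_assoc, Gamma_mul_Gamma_two_sub (by norm_num), mul_one_div, sin_pi_div_two]
    ring
  have hr0 : 0 < r := by linarith
  set k := r * log r / (r - 1)
  have hk : 1 < k := (one_lt_div (by linarith)).mpr (self_sub_one_lt_mul_log hr0.le hr.ne')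
  obtain ⟨p, hlt, hp2, hpε⟩ := ((eventually_four_mul_exp_mul_Gamma_mul_Gamma_lt hk).and
    (Ioo_mem_nhdsGT (by linarith : (2 : ℝ) < 2 + ε))).exists
  have hpow : r ^ (-(r * (p - 2)) / (p * (r - 1))) = exp (-(k * (p - 2)) / p) := by
    rw [rpow_def_of_pos hr0]
    congr 1
    simp only [k]
    field_simp
  exact ⟨p, hp2, hpε, hpow ▸ hlt⟩
end

section
/- Let r > 1 and p ≥ 2, and let f(x) = B e^{-|x|^p/p} on ℝ, where B^{-1} = 2 p^{1/p − 1} Γ(1/p), so that f is a probability density. Then ∫_ℝ f(x)^r dx = B^{r-1} r^{-1/p}, ∫_ℝ f′(x)² f(x)^{r-2} dx = 2 B^r (p/r)^{(2p-1)/p} (1/p) Γ(2 − 1/p), and consequently r · (∫_ℝ f^r)^{(1+r)/(1-r)} · ∫_ℝ f^{r-2} (f′)² = 4 Γ(1/p) Γ(2 − 1/p) · r^{2r/(p(r-1)) − 1}. -/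
open MeasureTheory Real

lemma aux_deriv_sq (p B : ℝ) (hp : 1 ≤ p) {x : ℝ} (hx : x ≠ 0) :
    (deriv (fun x => B * Real.exp (-(|x| ^ p) / p)) x) ^ 2
      = B ^ 2 * |x| ^ (2 * p - 2) * Real.exp (-(|x| ^ p) / p) ^ 2 := by
  have hp0 : (p : ℝ) ≠ 0 := by linarith
  rcases hx.lt_or_gt with hneg | hpos
  · have heq : (fun x : ℝ => B * Real.exp (-(|x| ^ p) / p))
        =ᶠ[nhds x] (fun y : ℝ => B * Real.exp (-((-y) ^ p) / p)) := by
      filter_upwards [Iio_mem_nhds hneg] with y hy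
      rw [abs_of_neg hy]
    have h1 : HasDerivAt (fun y : ℝ => (-y) ^ p) (p * (-x) ^ (p - 1) * (-1)) x :=
      (Real.hasDerivAt_rpow_const (x := -x) (Or.inl (by simpa using hx))).comp x (hasDerivAt_neg x)
    have h2 : HasDerivAt (fun y : ℝ => B * Real.exp (-((-y) ^ p) / p))
        (B * (Real.exp (-((-x) ^ p) / p) * ((-(p * (-x) ^ (p - 1) * (-1))) / p))) x :=
      (((h1.neg).div_const p).exp).const_mul B
    rw [heq.deriv_eq, h2.deriv, abs_of_neg hneg]
    have : -(p * (-x) ^ (p - 1) * (-1)) / p = (-x) ^ (p - 1) := by field_simp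
    rw [this]
    have h3 : ((-x) ^ (p - 1)) ^ 2 = (-x) ^ (2 * p - 2) := by
      rw [← Real.rpow_natCast ((-x) ^ (p-1)) 2, ← Real.rpow_mul (by linarith : (0:ℝ) ≤ -x)]
      norm_num; ring_nf
    rw [← h3]; ring
  · have heq : (fun x : ℝ => B * Real.exp (-(|x| ^ p) / p))
        =ᶠ[nhds x] (fun y : ℝ => B * Real.exp (-(y ^ p) / p)) := by
      filter_upwards [Ioi_mem_nhds hpos] with y hy
      rw [abs_of_pos hy]
    have h1 : HasDerivAt (fun y : ℝ => y ^ p) (p * x ^ (p - 1)) x :=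
      Real.hasDerivAt_rpow_const (Or.inl hx)
    have h2 : HasDerivAt (fun y : ℝ => B * Real.exp (-(y ^ p) / p))
        (B * (Real.exp (-(x ^ p) / p) * ((-(p * x ^ (p - 1))) / p))) x :=
      (((h1.neg).div_const p).exp).const_mul B
    rw [heq.deriv_eq, h2.deriv, abs_of_pos hpos]
    have : -(p * x ^ (p - 1)) / p = -(x ^ (p - 1)) := by field_simp
    rw [this]
    have h3 : (x ^ (p - 1)) ^ 2 = x ^ (2 * p - 2) := by
      rw [← Real.rpow_natCast (x ^ (p-1)) 2, ← Real.rpow_mul hpos.le]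
      norm_num; ring_nf
    rw [← h3]; ring

/-- Explicit computations for the density `f(x) = B e^(-|x|^p/p)` on `ℝ`, with
`B⁻¹ = 2 p^(1/p - 1) Γ(1/p)`: the values of `∫ f^r`, `∫ (f′)² f^(r-2)`, and of
`r (∫ f^r)^((1+r)/(1-r)) ∫ f^(r-2) (f′)²`. -/
theorem exp_power_density_computations (r p : ℝ) (hr : 1 < r) (hp : 2 ≤ p)
    (B : ℝ) (hB : B = (2 * p ^ (1 / p - 1) * Real.Gamma (1 / p))⁻¹)
    (f : ℝ → ℝ) (hf : f = fun x => B * Real.exp (-(|x| ^ p) / p)) :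
    (∫ x, f x ^ r) = B ^ (r - 1) * r ^ (-(1 : ℝ) / p) ∧
    (∫ x, (deriv f x) ^ 2 * f x ^ (r - 2)) =
      2 * B ^ r * (p / r) ^ ((2 * p - 1) / p) * (1 / p) * Real.Gamma (2 - 1 / p) ∧
    r * (∫ x, f x ^ r) ^ ((1 + r) / (1 - r)) * (∫ x, f x ^ (r - 2) * (deriv f x) ^ 2) =
      4 * Real.Gamma (1 / p) * Real.Gamma (2 - 1 / p) *
        r ^ (2 * r / (p * (r - 1)) - 1) := by
  have hp0 : (0:ℝ) < p := by linarith
  have hr0 : (0:ℝ) < r := by linarith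
  have hrm1 : r - 1 ≠ 0 := by linarith
  have h1r : (1:ℝ) - r ≠ 0 := by linarith
  have hb : (0:ℝ) < r / p := div_pos hr0 hp0
  have hG1 : 0 < Real.Gamma (1 / p) := Real.Gamma_pos_of_pos (by positivity)
  have hB0 : 0 < B := by rw [hB]; positivity
  have hBinv : B⁻¹ = 2 * p ^ (1 / p - 1) * Real.Gamma (1 / p) := by rw [hB, inv_inv]
  have hJ0 : ∫ x in Set.Ioi (0:ℝ), Real.exp (-(r/p) * x ^ p)
      = (r/p) ^ (-(1:ℝ)/p) * (1/p) * Real.Gamma (1/p) := by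
    have := integral_rpow_mul_exp_neg_mul_rpow (p := p) (q := 0) (b := r/p) hp0 (by norm_num) hb
    simpa using this
  have hJ1 : ∫ x in Set.Ioi (0:ℝ), x ^ (2*p-2) * Real.exp (-(r/p) * x ^ p)
      = (r/p) ^ (-(2*p-1)/p) * (1/p) * Real.Gamma ((2*p-1)/p) := by
    have := integral_rpow_mul_exp_neg_mul_rpow (p := p) (q := 2*p-2) (b := r/p) hp0
      (by linarith) hb
    rw [show (2*p-2+1 : ℝ) = 2*p-1 by ring] at this
    exact this
  have hfr : ∀ s : ℝ, ∀ x : ℝ, f x ^ s = B ^ s * Real.exp (-(s/p) * |x| ^ p) := by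
    intro s x
    rw [hf]
    simp only
    rw [Real.mul_rpow hB0.le (Real.exp_pos _).le, ← Real.exp_mul]
    congr 1
    ring
  -- first integral
  have hI1 : (∫ x, f x ^ r) = B ^ (r - 1) * r ^ (-(1 : ℝ) / p) := by
    simp_rw [hfr r]
    rw [integral_comp_abs (f := fun y => B ^ r * Real.exp (-(r/p) * y ^ p)),
      integral_const_mul, hJ0]
    have hsplit : ((r/p):ℝ) ^ (-(1:ℝ)/p) = r ^ (-(1:ℝ)/p) * p ^ ((1:ℝ)/p) := by
      rw [Real.div_rpow hr0.le hp0.le, div_eq_mul_inv, neg_div, Real.rpow_neg hp0.le, inv_inv]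
    have hpc : p ^ ((1:ℝ)/p) * (1/p) = p ^ ((1:ℝ)/p - 1) := by
      rw [show ((1:ℝ)/p - 1) = 1/p + (-1) from by ring, Real.rpow_add hp0, Real.rpow_neg_one,
        one_div]
    rw [hsplit, Real.rpow_sub hB0, Real.rpow_one,
      show B ^ r / B = B ^ r * B⁻¹ from div_eq_mul_inv _ _, hBinv]
    linear_combination (2 * B ^ r * Real.Gamma (1/p) * r ^ (-(1:ℝ)/p)) * hpc
  -- pointwise formula for the second integrand
  have h0ae : ∀ᵐ x : ℝ, x ≠ 0 := by
    rw [MeasureTheory.ae_iff]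
    simp
  have hpt : ∀ x : ℝ, x ≠ 0 →
      (deriv f x) ^ 2 * f x ^ (r - 2)
        = B ^ r * (|x| ^ (2*p-2) * Real.exp (-(r/p) * |x| ^ p)) := by
    intro x hx
    have hBr : B ^ 2 * B ^ (r-2) = B ^ r := by
      rw [← Real.rpow_two, ← Real.rpow_add hB0, show (2:ℝ)+(r-2) = r by ring]
    have hexp : Real.exp (-(|x| ^ p) / p) ^ 2 * Real.exp (-((r-2)/p) * |x| ^ p)
        = Real.exp (-(r/p) * |x| ^ p) := by
      rw [sq, ← Real.exp_add, ← Real.exp_add]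
      congr 1
      ring
    rw [hfr (r-2) x, hf, aux_deriv_sq p B (by linarith) hx, ← hBr, ← hexp]
    ring
  -- second integral
  have hI2 : (∫ x, (deriv f x) ^ 2 * f x ^ (r - 2)) =
      2 * B ^ r * (p / r) ^ ((2 * p - 1) / p) * (1 / p) * Real.Gamma (2 - 1 / p) := by
    rw [integral_congr_ae (g := fun x => B ^ r * (|x| ^ (2*p-2) * Real.exp (-(r/p) * |x| ^ p)))
      (by filter_upwards [h0ae] with x hx using hpt x hx)]
    rw [integral_comp_abs (f := fun y => B ^ r * (y ^ (2*p-2) * Real.exp (-(r/p) * y ^ p))),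
      integral_const_mul, hJ1]
    have hflip : ((r/p):ℝ) ^ (-(2*p-1)/p) = (p/r) ^ ((2*p-1)/p) := by
      rw [neg_div, Real.rpow_neg hb.le, ← Real.inv_rpow hb.le, inv_div]
    have hGam : Real.Gamma ((2*p-1)/p) = Real.Gamma (2 - 1/p) := by
      congr 1
      field_simp
    rw [hflip, hGam]
    ring
  refine ⟨hI1, hI2, ?_⟩
  have hI3 : (∫ x, f x ^ (r - 2) * (deriv f x) ^ 2) =
      2 * B ^ r * (p / r) ^ ((2 * p - 1) / p) * (1 / p) * Real.Gamma (2 - 1 / p) := by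
    rw [← hI2]
    exact integral_congr_ae (Filter.Eventually.of_forall fun x => mul_comm _ _)
  rw [hI1, hI3]
  have e1 : (B ^ (r-1) * r ^ (-(1:ℝ)/p)) ^ ((1+r)/(1-r))
      = B ^ (-(1+r)) * r ^ ((1+r)/(p*(r-1))) := by
    rw [Real.mul_rpow (Real.rpow_nonneg hB0.le _) (Real.rpow_nonneg hr0.le _),
      ← Real.rpow_mul hB0.le, ← Real.rpow_mul hr0.le,
      show (r-1)*((1+r)/(1-r)) = -(1+r) by field_simp; ring,
      show (-(1:ℝ)/p)*((1+r)/(1-r)) = (1+r)/(p*(r-1)) by field_simp; ring]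
  have hBc : B ^ (-(1+r)) * B ^ r = 2 * p ^ (1/p - 1) * Real.Gamma (1/p) := by
    rw [← Real.rpow_add hB0, show -(1+r)+r = (-1:ℝ) by ring, Real.rpow_neg_one, hBinv]
  have hpr : ((p/r):ℝ) ^ ((2*p-1)/p) = p ^ ((2*p-1)/p) * (r ^ ((2*p-1)/p))⁻¹ := by
    rw [Real.div_rpow hp0.le hr0.le, div_eq_mul_inv]
  have hpc2 : p ^ ((1:ℝ)/p - 1) * p ^ ((2*p-1)/p) = p := by
    rw [← Real.rpow_add hp0, show (1/p - 1 + (2*p-1)/p : ℝ) = 1 by field_simp; ring,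
      Real.rpow_one]
  have hpinv : p * (1/p) = 1 := by field_simp
  have hrc : r * r ^ ((1+r)/(p*(r-1))) * (r ^ ((2*p-1)/p))⁻¹
      = r ^ (2*r/(p*(r-1)) - 1) := by
    have h : r * r ^ ((1+r)/(p*(r-1))) * (r ^ ((2*p-1)/p))⁻¹
        = r ^ ((1:ℝ) + (1+r)/(p*(r-1)) + -((2*p-1)/p)) := by
      rw [Real.rpow_add hr0, Real.rpow_add hr0, Real.rpow_one, Real.rpow_neg hr0.le]
    rw [h]
    congr 1
    field_simp
    ring
  rw [e1, hpr]
  linear_combination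
    (2 * (1/p) * Real.Gamma (2-1/p) * p ^ ((2*p-1)/p) * r * r ^ ((1+r)/(p*(r-1)))
      * (r ^ ((2*p-1)/p))⁻¹) * hBc
    + (4 * Real.Gamma (1/p) * Real.Gamma (2-1/p) * (1/p) * r * r ^ ((1+r)/(p*(r-1)))
      * (r ^ ((2*p-1)/p))⁻¹) * hpc2
    + (4 * Real.Gamma (1/p) * Real.Gamma (2-1/p) * r * r ^ ((1+r)/(p*(r-1)))
      * (r ^ ((2*p-1)/p))⁻¹) * hpinv
    + (4 * Real.Gamma (1/p) * Real.Gamma (2-1/p)) * hrc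
end

section
/- Let r > 1 and α > 0, and suppose that N_r(f ∗ g)^α ≥ N_r(f)^α + N_r(g)^α holds for all probability densities f, g on ℝ (in particular for the uniform density on [0,1]). Then ((r+1)/2)^{2α/(r-1)} ≥ 2; equivalently, α ≥ (log 2 / 2) · (r−1)/log((r+1)/2). -/
open MeasureTheory

/-- The uniform density on `[0,1]`. -/
noncomputable def uu : ℝ → ℝ := fun x => if x ∈ Set.Icc (0:ℝ) 1 then 1 else 0

lemma uu_eq : uu = Set.indicator (Set.Icc (0:ℝ) 1) (fun _ => 1) := by
  funext x; simp [uu, Set.indicator]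

lemma uu_nonneg : ∀ x, 0 ≤ uu x := by intro x; unfold uu; split <;> norm_num

lemma uu_int : (∫ x, uu x) = 1 := by
  rw [uu_eq, MeasureTheory.integral_indicator measurableSet_Icc]
  simp

lemma uu_rpow_int (r : ℝ) (hr : 0 < r) : (∫ x, uu x ^ r) = 1 := by
  have h : ∀ x, uu x ^ r = uu x := by
    intro x; unfold uu; split
    · simp
    · simp [Real.zero_rpow hr.ne']
  simp_rw [h]; exact uu_int

lemma cv1 (x : ℝ) (h0 : 0 ≤ x) (h1 : x ≤ 1) : (x ⊓ 1 - (x - 1) ⊔ 0) ⊔ 0 = x := by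
  have e1 : x ⊓ 1 = x := min_eq_left h1
  have e2 : (x - 1) ⊔ 0 = 0 := max_eq_right (by linarith)
  rw [e1, e2, sub_zero, max_eq_left h0]

lemma cv2 (x : ℝ) (h0 : 1 ≤ x) (h1 : x ≤ 2) : (x ⊓ 1 - (x - 1) ⊔ 0) ⊔ 0 = 2 - x := by
  have e1 : x ⊓ 1 = 1 := min_eq_right h0
  have e2 : (x - 1) ⊔ 0 = x - 1 := max_eq_left (by linarith)
  rw [e1, e2, max_eq_left (by linarith)]; ring

lemma cv0 (x : ℝ) (h : x < 0 ∨ 2 < x) : (x ⊓ 1 - (x - 1) ⊔ 0) ⊔ 0 = 0 := by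
  rcases h with h | h
  · have e1 : x ⊓ 1 = x := min_eq_left (by linarith)
    have e2 : (x - 1) ⊔ 0 = 0 := max_eq_right (by linarith)
    rw [e1, e2]; exact max_eq_right (by linarith)
  · have e1 : x ⊓ 1 = 1 := min_eq_right (by linarith)
    have e2 : (x - 1) ⊔ 0 = x - 1 := max_eq_left (by linarith)
    rw [e1, e2]; exact max_eq_right (by linarith)

lemma conv_val (x : ℝ) : (∫ y, uu (x - y) * uu y) = (x ⊓ 1 - (x - 1) ⊔ 0) ⊔ 0 := by
  have h : ∀ y, uu (x - y) * uu y
      = Set.indicator (Set.Icc (max (x-1) 0) (min x 1)) (fun _ => (1:ℝ)) y := by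
    intro y
    have hiff : y ∈ Set.Icc (max (x-1) 0) (min x 1) ↔
        (x - y ∈ Set.Icc (0:ℝ) 1 ∧ y ∈ Set.Icc (0:ℝ) 1) := by
      simp only [Set.mem_Icc, max_le_iff, le_min_iff]
      constructor
      · rintro ⟨⟨h1, h2⟩, h3, h4⟩; exact ⟨⟨by linarith, by linarith⟩, h2, h4⟩
      · rintro ⟨⟨h1, h2⟩, h3, h4⟩; exact ⟨⟨by linarith, h3⟩, by linarith, h4⟩
    unfold uu
    by_cases h1 : x - y ∈ Set.Icc (0:ℝ) 1 <;> by_cases h2 : y ∈ Set.Icc (0:ℝ) 1 <;>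
      simp [h1, h2, Set.indicator_apply, hiff]
  simp_rw [h]
  rw [MeasureTheory.integral_indicator measurableSet_Icc]
  simp [Real.volume_Icc, ENNReal.toReal_ofReal']

lemma conv_rpow_int (r : ℝ) (hr : 1 < r) :
    (∫ x, (∫ y, uu (x - y) * uu y) ^ r) = 2 / (r + 1) := by
  have hr0 : (0:ℝ) < r := by linarith
  have key : ∀ x, (∫ y, uu (x - y) * uu y) ^ r
      = Set.indicator (Set.Icc (0:ℝ) 2)
          (fun x => ((x ⊓ 1 - (x - 1) ⊔ 0) ⊔ 0) ^ r) x := by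
    intro x
    rw [conv_val x]
    by_cases hx : x ∈ Set.Icc (0:ℝ) 2
    · rw [Set.indicator_of_mem hx]
    · rw [Set.indicator_of_notMem hx]
      have hx' : x < 0 ∨ 2 < x := by
        simp only [Set.mem_Icc, not_and_or, not_le] at hx
        exact hx
      rw [cv0 x hx', Real.zero_rpow hr0.ne']
  simp_rw [key]
  rw [MeasureTheory.integral_indicator measurableSet_Icc]
  have hsplit : Set.Icc (0:ℝ) 2 = Set.Icc 0 1 ∪ Set.Ioc 1 2 := by
    rw [Set.Icc_union_Ioc_eq_Icc] <;> norm_num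
  rw [hsplit, MeasureTheory.setIntegral_union]
  · have e1 : ∫ x in Set.Icc (0:ℝ) 1, ((x ⊓ 1 - (x - 1) ⊔ 0) ⊔ 0) ^ r
        = ∫ x in Set.Icc (0:ℝ) 1, x ^ r := by
      apply MeasureTheory.setIntegral_congr_fun measurableSet_Icc
      intro x hx
      simp only [Set.mem_Icc] at hx
      simp only [cv1 x hx.1 hx.2]
    have e2 : ∫ x in Set.Ioc (1:ℝ) 2, ((x ⊓ 1 - (x - 1) ⊔ 0) ⊔ 0) ^ r
        = ∫ x in Set.Ioc (1:ℝ) 2, (2 - x) ^ r := by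
      apply MeasureTheory.setIntegral_congr_fun measurableSet_Ioc
      intro x hx
      simp only [Set.mem_Ioc] at hx
      simp only [cv2 x hx.1.le hx.2]
    rw [e1, e2]
    rw [MeasureTheory.integral_Icc_eq_integral_Ioc,
      ← intervalIntegral.integral_of_le (by norm_num : (0:ℝ) ≤ 1),
      ← intervalIntegral.integral_of_le (by norm_num : (1:ℝ) ≤ 2)]
    have hz : (0:ℝ) ^ (r + 1) = 0 := Real.zero_rpow (by linarith)
    have i1 : ∫ x in (0:ℝ)..1, x ^ r = 1 / (r + 1) := by
      rw [integral_rpow (Or.inl (by linarith : (-1:ℝ) < r))]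
      rw [Real.one_rpow, hz]; ring
    have i2 : ∫ x in (1:ℝ)..2, (2 - x) ^ r = 1 / (r + 1) := by
      rw [intervalIntegral.integral_comp_sub_left (fun x => x ^ r) 2]
      norm_num
      rw [integral_rpow (Or.inl (by linarith : (-1:ℝ) < r))]
      rw [Real.one_rpow, hz]; ring
    rw [i1, i2]; ring
  · exact Set.disjoint_left.mpr (fun x hx hx' => absurd hx'.1 (not_lt.mpr hx.2))
  · exact measurableSet_Ioc
  · have int1 : IntegrableOn (fun x : ℝ => x ^ r) (Set.Icc 0 1) := by
      apply ContinuousOn.integrableOn_compact isCompact_Icc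
      exact ContinuousOn.rpow_const continuousOn_id (fun x _ => Or.inr hr0.le)
    apply int1.congr_fun _ measurableSet_Icc
    intro x hx
    simp only [Set.mem_Icc] at hx
    simp only [cv1 x hx.1 hx.2]
  · have int2 : IntegrableOn (fun x : ℝ => (2 - x) ^ r) (Set.Ioc 1 2) := by
      apply MeasureTheory.IntegrableOn.mono_set (t := Set.Icc (1:ℝ) 2) _ Set.Ioc_subset_Icc_self
      apply ContinuousOn.integrableOn_compact isCompact_Icc
      exact ContinuousOn.rpow_const (continuousOn_const.sub continuousOn_id)
        (fun x _ => Or.inr hr0.le)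
    apply int2.congr_fun _ measurableSet_Ioc
    intro x hx
    simp only [Set.mem_Ioc] at hx
    simp only [cv2 x hx.1.le hx.2]

/-- Lower bound on the optimal exponent: if `r > 1`, `α > 0`, and the Rényi
entropy power inequality `N_r(f ∗ g)^α ≥ N_r(f)^α + N_r(g)^α` holds for all
probability densities `f, g` on `ℝ` (where `N_r(h) = (∫ h^r)^(-2/(r-1))`),
then `((r+1)/2)^(2α/(r-1)) ≥ 2`, equivalently
`α ≥ (log 2 / 2) (r-1) / log((r+1)/2)`. -/
theorem renyi_epi_exponent_lower_bound (r α : ℝ) (hr : 1 < r) (hα : 0 < α)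
    (H : ∀ f g : ℝ → ℝ, (∀ x, 0 ≤ f x) → (∫ x, f x) = 1 →
      (∀ x, 0 ≤ g x) → (∫ x, g x) = 1 →
      ((∫ x, (∫ y, f (x - y) * g y) ^ r) ^ (-2 / (r - 1))) ^ α ≥
        ((∫ x, f x ^ r) ^ (-2 / (r - 1))) ^ α +
          ((∫ x, g x ^ r) ^ (-2 / (r - 1))) ^ α) :
    ((r + 1) / 2) ^ (2 * α / (r - 1)) ≥ 2 ∧
      α ≥ Real.log 2 / 2 * (r - 1) / Real.log ((r + 1) / 2) := by
  have hr0 : (0:ℝ) < r := by linarith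
  have h1 := H uu uu uu_nonneg uu_int uu_nonneg uu_int
  rw [conv_rpow_int r hr, uu_rpow_int r hr0] at h1
  have hb : (1:ℝ) < (r + 1) / 2 := by linarith
  have hb0 : (0:ℝ) < (r + 1) / 2 := by linarith
  have hrw : ((2 / (r+1) : ℝ)) ^ (-2 / (r - 1)) = ((r + 1) / 2) ^ (2 / (r - 1)) := by
    rw [neg_div, Real.rpow_neg (by positivity), ← Real.inv_rpow (by positivity)]
    congr 1
    field_simp
  rw [hrw, Real.one_rpow, Real.one_rpow] at h1
  rw [← Real.rpow_mul hb0.le] at h1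
  have hexp : 2 / (r - 1) * α = 2 * α / (r - 1) := by ring
  rw [hexp] at h1
  norm_num at h1
  refine ⟨h1, ?_⟩
  have hL : 0 < Real.log ((r + 1) / 2) := Real.log_pos hb
  have hlog : Real.log 2 ≤ 2 * α / (r - 1) * Real.log ((r + 1) / 2) := by
    have := Real.log_le_log (by norm_num) h1
    rwa [Real.log_rpow hb0] at this
  rw [ge_iff_le, div_le_iff₀ hL]
  have hr1 : (0:ℝ) < r - 1 := by linarith
  have h2 := mul_le_mul_of_nonneg_right hlog hr1.le
  have h3 : 2 * α / (r - 1) * Real.log ((r + 1) / 2) * (r - 1)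
      = 2 * (α * Real.log ((r + 1) / 2)) := by field_simp
  rw [h3] at h2
  linarith
end

section
/- Let f = 1_{[0,1]} be the uniform density on [0,1]. Then the essential supremum of f ∗ f equals the essential supremum of f (both equal 1), so N_∞(X+Y) = N_∞(X) for X, Y independent and uniform on [0,1], where N_∞(f) = ‖f‖_∞^{-2}. Consequently, for every α > 0 the inequality N_∞^α(X+Y) ≥ N_∞^α(X) + N_∞^α(Y) fails for this pair. -/
open MeasureTheory Set

/-! Both `f = 1_{[0,1]}` and the tent function `f ∗ f` are bounded by `1` and exceed every
`a < 1` on a set of positive length, so both essential suprema equal `1`. Hence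
`N_∞(X+Y) = N_∞(X) = N_∞(Y) = 1`, and `1 ≥ 1 + 1` is false whatever the exponent. -/

theorem essSup_eq_of_ae_le_of_measure_lt_ne_zero {α : Type*} [MeasurableSpace α]
    {μ : Measure α} {g : α → ℝ} {c : ℝ} (hle : ∀ᵐ x ∂μ, g x ≤ c)
    (hlt : ∀ a < c, μ {x | a < g x} ≠ 0) : essSup g μ = c := by
  refine IsLeast.csInf_eq ⟨hle, fun a (ha : ∀ᵐ x ∂μ, g x ≤ a) => ?_⟩
  by_contra! hac
  exact hlt a hac (by simpa only [not_le] using ae_iff.mp ha)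

theorem integral_indicator_Icc_mul_indicator_Icc (x : ℝ) :
    ∫ y, (Icc (0 : ℝ) 1).indicator (fun _ => (1 : ℝ)) (x - y) *
        (Icc (0 : ℝ) 1).indicator (fun _ => (1 : ℝ)) y =
      max (min x 1 - max (x - 1) 0) 0 := by
  have hshift : ∀ y, (Icc (0 : ℝ) 1).indicator (fun _ => (1 : ℝ)) (x - y) =
      (Icc (x - 1) x).indicator (fun _ => 1) y := fun y => by
    simp only [indicator, mem_Icc, sub_nonneg, sub_le_comm (a := x)]
    congr 1
    exact propext and_comm
  simp_rw [hshift, ← inter_indicator_mul, Icc_inter_Icc, mul_one]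
  exact (integral_indicator_one measurableSet_Icc).trans Real.volume_real_Icc

theorem essSup_indicator_Icc_zero_one :
    essSup ((Icc (0 : ℝ) 1).indicator fun _ => (1 : ℝ)) volume = 1 := by
  refine essSup_eq_of_ae_le_of_measure_lt_ne_zero
    (.of_forall fun x => indicator_le_self' (fun _ _ => zero_le_one) x) fun a ha => ?_
  refine ne_bot_of_le_ne_bot ?_ (measure_mono fun x (hx : x ∈ Icc (0 : ℝ) 1) =>
    show a < _ by rwa [indicator_of_mem hx])
  simp [Real.volume_Icc]

theorem essSup_conv_indicator_Icc_zero_one :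
    essSup (fun x => ∫ y, (Icc (0 : ℝ) 1).indicator (fun _ => (1 : ℝ)) (x - y) *
      (Icc (0 : ℝ) 1).indicator (fun _ => (1 : ℝ)) y) volume = 1 := by
  simp_rw [integral_indicator_Icc_mul_indicator_Icc]
  refine essSup_eq_of_ae_le_of_measure_lt_ne_zero (.of_forall fun x => ?_) fun a ha => ?_
  · have := min_le_right x 1
    have := le_max_right (x - 1) 0
    exact max_le (by linarith) zero_le_one
  · -- on `(max a 0, 1)` the tent function is the identity
    refine ne_bot_of_le_ne_bot ((Measure.measure_Ioo_pos _).mpr (max_lt ha one_pos)).ne'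
      (measure_mono fun x hx => ?_)
    obtain ⟨hax, hx1⟩ := hx
    show a < max (min x 1 - max (x - 1) 0) 0
    rw [min_eq_left hx1.le, max_eq_right (a := x - 1) (by linarith), sub_zero]
    exact ((le_max_left a 0).trans_lt hax).trans_le (le_max_left _ _)

/-- For `f = 1_{[0,1]}` the uniform density on `[0,1]`: the essential supremum
of `f ∗ f` equals that of `f` (both equal `1`), so `N_∞(X+Y) = N_∞(X)` for
`X, Y` independent uniform on `[0,1]`, where `N_∞(h) = ‖h‖_∞^(-2)`.
Consequently, for every `α > 0` the inequality
`N_∞^α(X+Y) ≥ N_∞^α(X) + N_∞^α(Y)` fails for this pair. -/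
theorem renyi_infinity_epi_fails
    (f : ℝ → ℝ) (hf : f = (Set.Icc (0 : ℝ) 1).indicator fun _ => (1 : ℝ)) :
    essSup (fun x => ∫ y, f (x - y) * f y) (volume : Measure ℝ) =
      essSup f (volume : Measure ℝ) ∧
    essSup f (volume : Measure ℝ) = 1 ∧
    ∀ α : ℝ, 0 < α →
      ¬ ((essSup (fun x => ∫ y, f (x - y) * f y) (volume : Measure ℝ) ^ (-2 : ℝ)) ^ α ≥
          (essSup f (volume : Measure ℝ) ^ (-2 : ℝ)) ^ α +
            (essSup f (volume : Measure ℝ) ^ (-2 : ℝ)) ^ α) := by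
  subst hf
  rw [essSup_conv_indicator_Icc_zero_one, essSup_indicator_Icc_zero_one]
  refine ⟨rfl, rfl, fun α _ => ?_⟩
  norm_num
end

section
/- Let r > 1, α > 0, and let f, g be probability densities on ℝ such that N_r(f ∗ g)^α = N_r(f)^α + N_r(g)^α, where N_r is the one-dimensional Rényi entropy power. For n ≥ 1, let f^{⊗n}(x) = ∏_{i=1}^n f(x_i) and g^{⊗n}(x) = ∏_{i=1}^n g(x_i) be the corresponding product densities on ℝⁿ. Then N_r(f^{⊗n} ∗ g^{⊗n})^α = N_r(f^{⊗n})^α + N_r(g^{⊗n})^α, where N_r is the n-dimensional Rényi entropy power. In particular, the exponent α in the Rényi entropy power inequality cannot be improved by increasing the dimension. -/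
open MeasureTheory

/-! Convolution and the integral of an `r`-th power both factor over the coordinates of a
product density, so `∫ (f^{⊗n} ∗ g^{⊗n})^r = (∫ (f ∗ g)^r)^n`, and likewise for `f` and `g`;
the factor `n` in the exponent `-2/(n(r-1))` of the `n`-dimensional entropy power cancels
this `n`-th power, so every entropy power in the identity is dimension-free. -/

section ProductDensities

variable {ι 𝕜 E : Type*} [Fintype ι] [RCLike 𝕜] [MeasureSpace E] [SigmaFinite (volume : Measure E)]

theorem integral_prod_sub_mul_prod [Sub E] (f g : E → 𝕜) (x : ι → E) :
    ∫ y : ι → E, (∏ i, f ((x - y) i)) * ∏ i, g (y i) = ∏ i, ∫ t, f (x i - t) * g t := by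
  simp_rw [← Finset.prod_mul_distrib, Pi.sub_apply]
  exact integral_fintype_prod_volume_eq_prod fun i t => f (x i - t) * g t

theorem integral_prod_rpow_eq_pow (φ : E → ℝ) (hφ : ∀ z, 0 ≤ φ z) (r : ℝ) :
    ∫ x : ι → E, (∏ i, φ (x i)) ^ r = (∫ z, φ z ^ r) ^ Fintype.card ι := by
  simp_rw [← Real.finsetProd_rpow _ _ fun i _ => hφ _]
  exact integral_fintype_prod_volume_eq_pow fun z => φ z ^ r

end ProductDensities

theorem Real.rpow_pow_div_mul_left {A : ℝ} (hA : 0 ≤ A) {n : ℕ} (hn : n ≠ 0) (c s : ℝ) :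
    (A ^ n) ^ (c / (n * s)) = A ^ (c / s) := by
  rw [← Real.rpow_natCast, ← Real.rpow_mul hA, ← mul_div_assoc,
    mul_div_mul_left c s (Nat.cast_ne_zero.mpr hn)]

theorem renyi_epi_tensorization_general (r α : ℝ)
    (n : ℕ) (hn : 1 ≤ n)
    (f g : ℝ → ℝ)
    (hf0 : ∀ x, 0 ≤ f x)
    (hg0 : ∀ x, 0 ≤ g x)
    (H : ((∫ x, (∫ y, f (x - y) * g y) ^ r) ^ (-2 / (r - 1))) ^ α =
      ((∫ x, f x ^ r) ^ (-2 / (r - 1))) ^ α +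
        ((∫ x, g x ^ r) ^ (-2 / (r - 1))) ^ α) :
    ((∫ x : Fin n → ℝ,
          (∫ y : Fin n → ℝ, (∏ i, f ((x - y) i)) * ∏ i, g (y i)) ^ r) ^
        (-2 / ((n : ℝ) * (r - 1)))) ^ α =
      ((∫ x : Fin n → ℝ, (∏ i, f (x i)) ^ r) ^ (-2 / ((n : ℝ) * (r - 1)))) ^ α +
        ((∫ x : Fin n → ℝ, (∏ i, g (x i)) ^ r) ^ (-2 / ((n : ℝ) * (r - 1)))) ^ α := by
  have hconv0 : ∀ z, 0 ≤ ∫ t, f (z - t) * g t := fun z =>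
    integral_nonneg fun t => mul_nonneg (hf0 _) (hg0 _)
  have hpow_nonneg : ∀ φ : ℝ → ℝ, (∀ z, 0 ≤ φ z) → 0 ≤ ∫ z, φ z ^ r := fun φ hφ =>
    integral_nonneg fun z => Real.rpow_nonneg (hφ z) r
  have hn0 : n ≠ 0 := Nat.one_le_iff_ne_zero.mp hn
  simp_rw [integral_prod_sub_mul_prod]
  rw [integral_prod_rpow_eq_pow _ hconv0, integral_prod_rpow_eq_pow _ hf0,
    integral_prod_rpow_eq_pow _ hg0]
  simp only [Fintype.card_fin]
  rw [Real.rpow_pow_div_mul_left (hpow_nonneg _ hconv0) hn0,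
    Real.rpow_pow_div_mul_left (hpow_nonneg _ hf0) hn0,
    Real.rpow_pow_div_mul_left (hpow_nonneg _ hg0) hn0]
  exact H

/-- Tensorization: if `r > 1`, `α > 0`, and probability densities `f, g` on `ℝ`
satisfy `N_r(f ∗ g)^α = N_r(f)^α + N_r(g)^α` (one-dimensional Rényi entropy
powers, `N_r(h) = (∫ h^r)^(-2/(r-1))`), then the product densities
`f^{⊗n}, g^{⊗n}` on `ℝⁿ` satisfy
`N_r(f^{⊗n} ∗ g^{⊗n})^α = N_r(f^{⊗n})^α + N_r(g^{⊗n})^α` with the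
`n`-dimensional Rényi entropy power `N_r(h) = (∫ h^r)^(-2/(n(r-1)))`.
Hence the exponent `α` cannot be improved by increasing the dimension. -/
theorem renyi_epi_tensorization (r α : ℝ) (hr : 1 < r) (hα : 0 < α)
    (n : ℕ) (hn : 1 ≤ n)
    (f g : ℝ → ℝ) (hfm : Measurable f) (hgm : Measurable g)
    (hf0 : ∀ x, 0 ≤ f x) (hf1 : (∫ x, f x) = 1)
    (hg0 : ∀ x, 0 ≤ g x) (hg1 : (∫ x, g x) = 1)
    (hfr : Integrable (fun x => f x ^ r))
    (hgr : Integrable (fun x => g x ^ r))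
    (H : ((∫ x, (∫ y, f (x - y) * g y) ^ r) ^ (-2 / (r - 1))) ^ α =
      ((∫ x, f x ^ r) ^ (-2 / (r - 1))) ^ α +
        ((∫ x, g x ^ r) ^ (-2 / (r - 1))) ^ α) :
    ((∫ x : Fin n → ℝ,
          (∫ y : Fin n → ℝ, (∏ i, f ((x - y) i)) * ∏ i, g (y i)) ^ r) ^
        (-2 / ((n : ℝ) * (r - 1)))) ^ α =
      ((∫ x : Fin n → ℝ, (∏ i, f (x i)) ^ r) ^ (-2 / ((n : ℝ) * (r - 1)))) ^ α +
        ((∫ x : Fin n → ℝ, (∏ i, g (x i)) ^ r) ^ (-2 / ((n : ℝ) * (r - 1)))) ^ α :=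
  renyi_epi_tensorization_general r α n hn f g hf0 hg0 H
end
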